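/- Let F = G − H be a direct sum decomposition of degree d, where G ∈ ℂ[x_1,…,x_i] and H ∈ ℂ[y_1,…,y_j] are nonzero forms of degree d in disjoint complementary sets of variables. Then there exist homogeneous elements δ_1 of degree d in the dual variables α_1,…,α_i with δ_1 ⌟ G = 1 and δ_2 of degree d in the dual variables β_1,…,β_j with δ_2 ⌟ H = 1, such that, setting Δ = δ_1 + δ_2, one has F^⊥ = (G^⊥ ∩ H^⊥) + ⟨Δ⟩; moreover (F^⊥)_k = (G^⊥ ∩ H^⊥)_k for every k ≠ d. -/

import Mathlib

/-!
Apolarity setup.  `S = ℂ[x_1,…,x_n]` and its dual ring `T = ℂ[α_1,…,α_n]` are both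
realized as `MvPolynomial (Fin n) ℂ`; the apolarity action `Θ ⌟ F` (`contract Θ F`)
lets `α_i` act as the partial differentiation operator `∂/∂x_i`.
-/

open MvPolynomial

noncomputable section Apolarity

/-- Partial derivatives on `ℂ[x_1,…,x_n]` commute. -/
lemma pderiv_pderiv_comm (n : ℕ) (i j : Fin n) (f : MvPolynomial (Fin n) ℂ) :
    pderiv i (pderiv j f) = pderiv j (pderiv i f) := by
  induction f using MvPolynomial.induction_on with
  | C a => simp
  | add p q hp hq => simp [hp, hq]
  | mul_X p k hp =>
    rcases eq_or_ne i k with rfl | hik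
    · rcases eq_or_ne j i with rfl | hjk
      · rfl
      · simp only [pderiv_mul, pderiv_X_self, pderiv_X_of_ne hjk, pderiv_X_of_ne hjk.symm,
          map_add, map_zero, map_one, Derivation.map_one_eq_zero, mul_one, mul_zero,
          add_zero, zero_add, hp]
    · rcases eq_or_ne j k with rfl | hjk
      · simp only [pderiv_mul, pderiv_X_self, pderiv_X_of_ne hik, pderiv_X_of_ne hik.symm,
          map_add, map_zero, map_one, Derivation.map_one_eq_zero, mul_one, mul_zero,
          add_zero, zero_add, hp]
      · simp only [pderiv_mul, pderiv_X_of_ne hik.symm, pderiv_X_of_ne hjk.symm, map_add,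
          map_zero, mul_zero, add_zero, zero_add, hp]

variable (n : ℕ)

/-- The endomorphism `∂/∂x_i` of `S = ℂ[x_1,…,x_n]`. -/
def derOp (i : Fin n) : Module.End ℂ (MvPolynomial (Fin n) ℂ) :=
  (pderiv i).toLinearMap

lemma derOp_commute (i j : Fin n) : Commute (derOp n i) (derOp n j) :=
  LinearMap.ext fun f => pderiv_pderiv_comm n i j f

/-- The commuting product of the operators `(∂/∂x_i)^(m i)`. -/
def piDiffHom : (Fin n → Multiplicative ℕ) →* Module.End ℂ (MvPolynomial (Fin n) ℂ) :=
  MonoidHom.noncommPiCoprod (fun i : Fin n => powersHom _ (derOp n i))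
    (fun i j _ x y => ((derOp_commute n i j).pow_pow x y))

/-- The differential operator `∏ i, (∂/∂x_i)^(m i)` attached to an exponent vector `m`. -/
def diffMonoidHom : Multiplicative (Fin n →₀ ℕ) →* Module.End ℂ (MvPolynomial (Fin n) ℂ) :=
  (piDiffHom n).comp
    (AddMonoidHom.toMultiplicative
      (Finsupp.coeFnAddHom : (Fin n →₀ ℕ) →+ (Fin n → ℕ)))

/-- The apolarity action of the dual ring `T = ℂ[α_1,…,α_n]` on `S = ℂ[x_1,…,x_n]`, as an
algebra homomorphism to differential operators: `α_i` acts as `∂/∂x_i`. -/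
def apolarAlgHom :
    MvPolynomial (Fin n) ℂ →ₐ[ℂ] Module.End ℂ (MvPolynomial (Fin n) ℂ) :=
  AddMonoidAlgebra.lift ℂ _ (Fin n →₀ ℕ) (diffMonoidHom n)

variable {n}

/-- The apolarity action `Θ ⌟ F`: apply to `F` the differential operator obtained from `Θ`
by substituting `∂/∂x_i` for the `i`-th (dual) variable. -/
def contract (Θ F : MvPolynomial (Fin n) ℂ) : MvPolynomial (Fin n) ℂ :=
  apolarAlgHom n Θ F

lemma apolarAlgHom_X (i : Fin n) : apolarAlgHom n (X i) = derOp n i := by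
  classical
  have hX : (X i : MvPolynomial (Fin n) ℂ)
      = AddMonoidAlgebra.single (Finsupp.single i 1) (1 : ℂ) := rfl
  rw [hX]
  rw [show apolarAlgHom n (AddMonoidAlgebra.single (Finsupp.single i 1) (1:ℂ))
      = (1:ℂ) • diffMonoidHom n (Multiplicative.ofAdd (Finsupp.single i 1)) from
    AddMonoidAlgebra.lift_single _ _ _]
  rw [one_smul]
  rw [diffMonoidHom]
  have harg : (AddMonoidHom.toMultiplicative
        (Finsupp.coeFnAddHom : (Fin n →₀ ℕ) →+ (Fin n → ℕ)))
        (Multiplicative.ofAdd (Finsupp.single i 1))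
      = Pi.mulSingle (M := fun _ : Fin n => Multiplicative ℕ) i (Multiplicative.ofAdd 1) := by
    funext j
    rcases eq_or_ne j i with rfl | hj
    · show Multiplicative.ofAdd ((Finsupp.single j 1 : Fin n →₀ ℕ) j)
        = Pi.mulSingle (M := fun _ : Fin n => Multiplicative ℕ) j (Multiplicative.ofAdd 1) j
      rw [Finsupp.single_eq_same, Pi.mulSingle_eq_same]
    · show Multiplicative.ofAdd ((Finsupp.single i 1 : Fin n →₀ ℕ) j)
        = Pi.mulSingle (M := fun _ : Fin n => Multiplicative ℕ) i (Multiplicative.ofAdd 1) j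
      rw [Finsupp.single_eq_of_ne hj, Pi.mulSingle_eq_of_ne hj]
      exact ofAdd_zero
  refine (congrArg (piDiffHom n) harg).trans ?_
  rw [piDiffHom]
  refine (MonoidHom.noncommPiCoprod_mulSingle _ _ _).trans ?_
  rfl

/-- Sanity check: the dual variable `α_i` acts on `F` as `∂F/∂x_i`. -/
@[simp] lemma contract_X (i : Fin n) (F : MvPolynomial (Fin n) ℂ) :
    contract (X i) F = pderiv i F := by
  rw [contract, apolarAlgHom_X]; rfl

/-- The apolar (annihilator) ideal `F^⊥ = {Θ ∈ T : Θ ⌟ F = 0}` of a polynomial `F`. -/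
def apolarIdeal (F : MvPolynomial (Fin n) ℂ) : Ideal (MvPolynomial (Fin n) ℂ) where
  carrier := {Θ | contract Θ F = 0}
  zero_mem' := by simp [contract]
  add_mem' := by
    intro a b ha hb
    simp only [Set.mem_setOf_eq, contract, map_add, LinearMap.add_apply] at *
    rw [ha, hb, add_zero]
  smul_mem' := by
    intro c x hx
    simp only [Set.mem_setOf_eq, smul_eq_mul, contract, map_mul, Module.End.mul_apply] at *
    rw [hx, map_zero]

@[simp] lemma mem_apolarIdeal {Θ F : MvPolynomial (Fin n) ℂ} :
    Θ ∈ apolarIdeal F ↔ contract Θ F = 0 := Iff.rfl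

variable (n)

/-- The irrelevant maximal ideal `m = ⟨α_1,…,α_n⟩` of `T`. -/
def irrIdeal : Ideal (MvPolynomial (Fin n) ℂ) :=
  Ideal.span (Set.range X)

variable {n}

/-- The homogeneous ideal `I` has a minimal generator of degree `k`, i.e. `(I/mI)_k ≠ 0`:
there is a homogeneous element of `I` of degree `k` not belonging to `m * I`. -/
def HasMinGenOfDegree (I : Ideal (MvPolynomial (Fin n) ℂ)) (k : ℕ) : Prop :=
  ∃ Θ, Θ ∈ I ∧ Θ.IsHomogeneous k ∧ Θ ∉ irrIdeal n * I

/-- The homogeneous ideal `I` has at least `r` minimal generators of degree `k`, i.e.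
`dim_ℂ (I/mI)_k ≥ r`: there are `r` homogeneous degree-`k` elements of `I` that are
linearly independent modulo `m * I`. -/
def MinGensAtLeast (I : Ideal (MvPolynomial (Fin n) ℂ)) (k r : ℕ) : Prop :=
  ∃ Θ : Fin r → MvPolynomial (Fin n) ℂ,
    (∀ i, Θ i ∈ I ∧ (Θ i).IsHomogeneous k) ∧
    ∀ c : Fin r → ℂ, (∑ i, c i • Θ i) ∈ irrIdeal n * I → ∀ i, c i = 0

/-- `F` is an `s`-fold direct sum of degree `d`: `F = F_1 + ⋯ + F_s` where the `F_i` are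
nonzero degree-`d` forms in independent subspaces `V_i` of the space of linear forms with
`V = V_1 ⊕ ⋯ ⊕ V_s` (i.e. in disjoint sets of variables, up to linear change of variables;
`F_i ∈ S^d V_i` is expressed as membership in the subalgebra generated by `V_i`). -/
def IsSFoldDirectSum (F : MvPolynomial (Fin n) ℂ) (d s : ℕ) : Prop :=
  ∃ (V : Fin s → Submodule ℂ (MvPolynomial (Fin n) ℂ))
    (G : Fin s → MvPolynomial (Fin n) ℂ),
    (∀ i, V i ≤ homogeneousSubmodule (Fin n) ℂ 1) ∧
    iSupIndep V ∧
    (⨆ i, V i) = homogeneousSubmodule (Fin n) ℂ 1 ∧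
    (∀ i, G i ≠ 0 ∧ (G i).IsHomogeneous d ∧ G i ∈ Algebra.adjoin ℂ (V i : Set _)) ∧
    F = ∑ i, G i

/-- `F` is a direct sum: `F = F₁ + F₂` with `F₁ ∈ S^d V₁`, `F₂ ∈ S^d V₂` nonzero and
`V = V₁ ⊕ V₂`. -/
def IsDirectSum (F : MvPolynomial (Fin n) ℂ) (d : ℕ) : Prop :=
  IsSFoldDirectSum F d 2

/-- `F` is a limit (as `t → 0`) of `s`-fold direct sums of degree `d`. -/
def IsLimitOfSFoldDirectSums (F : MvPolynomial (Fin n) ℂ) (d s : ℕ) : Prop :=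
  ∃ G : ℂ → MvPolynomial (Fin n) ℂ,
    (∀ t : ℂ, t ≠ 0 → IsSFoldDirectSum (G t) d s) ∧
    ∀ m : Fin n →₀ ℕ,
      Filter.Tendsto (fun t => MvPolynomial.coeff m (G t))
        (nhdsWithin (0 : ℂ) {(0 : ℂ)}ᶜ) (nhds (MvPolynomial.coeff m F))

/-- `F` is a limit of direct sums. -/
def IsLimitOfDirectSums (F : MvPolynomial (Fin n) ℂ) (d : ℕ) : Prop :=
  IsLimitOfSFoldDirectSums F d 2

/-- `F` is concise: `(F^⊥)_1 = 0`, i.e. `F` cannot be written using fewer variables. -/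
def Concise (F : MvPolynomial (Fin n) ℂ) : Prop :=
  ∀ Θ : MvPolynomial (Fin n) ℂ, Θ.IsHomogeneous 1 → contract Θ F = 0 → Θ = 0

end Apolarity

/-!
Because `G` and `H` involve disjoint sets of variables, so do `Θ ⌟ G` and `Θ ⌟ H` for every `Θ`.
Hence if `Θ` annihilates `G - H`, the common value `Θ ⌟ G = Θ ⌟ H` is a constant `c`, and
`Θ - c Δ` annihilates both `G` and `H`. For `δ₁` take a scaled monomial `α^m` with `x^m` in the
support of `G`: contracting a form of degree `|m|` with `α^m` picks out `m! · coeff_m`, and `δ₁`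
kills `H` since it has no constant term. Finally `Θ ⌟ G` is homogeneous of degree `d - k`, so it
can only be a nonzero constant when `k = d`.
-/

namespace MvPolynomial

variable {σ τ υ R : Type*} [CommSemiring R] {P : MvPolynomial σ R}

theorem eq_C_of_isHomogeneous_zero (hP : P.IsHomogeneous 0) : P = C (P.coeff 0) :=
  totalDegree_eq_zero_iff_eq_C.mp (Nat.le_zero.mp hP.totalDegree_le)

theorem pderiv_eq_zero_of_isHomogeneous_zero (hP : P.IsHomogeneous 0) (i : σ) :
    pderiv i P = 0 := by
  rw [eq_C_of_isHomogeneous_zero hP, pderiv_C]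

theorem vars_subset_range_of_mem_range_rename {f : τ → σ}
    (hP : P ∈ (rename (R := R) f).range) : ↑P.vars ⊆ Set.range f := by
  obtain ⟨p, rfl⟩ := hP
  intro j hj
  obtain ⟨i, -, rfl⟩ := mem_vars_rename f p hj
  exact ⟨i, rfl⟩

theorem eq_C_of_mem_range_rename_of_disjoint {f : τ → σ} {g : υ → σ}
    (hfg : Disjoint (Set.range f) (Set.range g))
    (hf : P ∈ (rename (R := R) f).range) (hg : P ∈ (rename (R := R) g).range) :
    P = C (P.coeff 0) := by
  rw [← vars_eq_empty_iff_eq_C, ← Finset.coe_eq_empty, ← Set.subset_empty_iff]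
  exact fun i hi => Set.disjoint_left.mp hfg (vars_subset_range_of_mem_range_rename hf hi)
    (vars_subset_range_of_mem_range_rename hg hi)

theorem pderiv_mem_range_rename {f : τ → σ} (hf : f.Injective) (i : σ)
    (hP : P ∈ (rename (R := R) f).range) : pderiv i P ∈ (rename (R := R) f).range := by
  by_cases hi : i ∈ Set.range f
  · obtain ⟨j, rfl⟩ := hi
    obtain ⟨p, rfl⟩ := hP
    exact ⟨pderiv j p, (pderiv_rename hf j p).symm⟩
  · rw [pderiv_eq_zero_of_notMem_vars fun h => hi (vars_subset_range_of_mem_range_rename hP h)]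
    exact zero_mem _

end MvPolynomial

section Contract

variable {n : ℕ} {Θ Ψ F P : MvPolynomial (Fin n) ℂ}

@[simp] theorem contract_add_left : contract (Θ + Ψ) F = contract Θ F + contract Ψ F := by
  simp [contract]

@[simp] theorem contract_sub_left : contract (Θ - Ψ) F = contract Θ F - contract Ψ F := by
  simp [contract]

@[simp] theorem contract_sub_right : contract Θ (F - P) = contract Θ F - contract Θ P := by
  simp [contract]

@[simp] theorem contract_zero_right : contract Θ 0 = 0 := by
  simp [contract]

theorem contract_mul : contract (Θ * Ψ) F = contract Θ (contract Ψ F) := by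
  simp [contract]

@[simp] theorem contract_C (a : ℂ) : contract (C a) F = a • F := by
  simp [contract, ← algebraMap_eq]

noncomputable def contractₗ (F : MvPolynomial (Fin n) ℂ) :
    MvPolynomial (Fin n) ℂ →ₗ[ℂ] MvPolynomial (Fin n) ℂ :=
  LinearMap.applyₗ F ∘ₗ (apolarAlgHom n).toLinearMap

@[simp] theorem contractₗ_apply : contractₗ F Θ = contract Θ F := rfl

end Contract

section Degree

variable {n : ℕ} {Θ L F : MvPolynomial (Fin n) ℂ} {d k : ℕ}

theorem span_X_le_comap_contractₗ {p : Submodule ℂ (MvPolynomial (Fin n) ℂ)}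
    (h : ∀ i, pderiv i F ∈ p) :
    homogeneousSubmodule (Fin n) ℂ 1 ≤ p.comap (contractₗ F) := by
  rw [homogeneousSubmodule_one_eq_span_X, Submodule.span_le]
  rintro _ ⟨i, rfl⟩
  simpa using h i

theorem isHomogeneous_contract_of_isHomogeneous_one (hL : L.IsHomogeneous 1)
    (hF : F.IsHomogeneous d) : (contract L F).IsHomogeneous (d - 1) :=
  span_X_le_comap_contractₗ (p := homogeneousSubmodule (Fin n) ℂ (d - 1))
    (fun _ => hF.pderiv) hL

theorem contract_eq_zero_of_isHomogeneous_one (hL : L.IsHomogeneous 1)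
    (hF : F.IsHomogeneous 0) : contract L F = 0 :=
  span_X_le_comap_contractₗ (p := ⊥)
    (fun i => (Submodule.mem_bot ℂ).mpr (pderiv_eq_zero_of_isHomogeneous_zero hF i)) hL

theorem isHomogeneous_contract (hΘ : Θ.IsHomogeneous k) (hF : F.IsHomogeneous d) :
    (contract Θ F).IsHomogeneous (d - k) := by
  rw [← mem_homogeneousSubmodule, ← homogeneousSubmodule_one_pow] at hΘ
  induction hΘ using Submodule.pow_induction_on_left' with
  | algebraMap a => simpa [algebraMap_eq, smul_eq_C_mul] using hF.C_mul a
  | add _ _ _ _ _ hΘ hΨ => simpa using hΘ.add hΨ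
  | mem_mul L hL i _ _ hΘ =>
    rw [contract_mul, Nat.succ_eq_add_one, ← Nat.sub_sub]
    exact isHomogeneous_contract_of_isHomogeneous_one hL hΘ

theorem contract_eq_zero_of_lt (hΘ : Θ.IsHomogeneous k) (hF : F.IsHomogeneous d) (hdk : d < k) :
    contract Θ F = 0 := by
  rw [← mem_homogeneousSubmodule, ← homogeneousSubmodule_one_pow] at hΘ
  induction hΘ using Submodule.pow_induction_on_left' with
  | algebraMap a => omega
  | add _ _ _ _ _ hΘ hΨ => simp [hΘ hdk, hΨ hdk]
  | mem_mul L hL i Θ hΘ ih =>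
    rw [contract_mul]
    rcases Nat.lt_succ_iff_lt_or_eq.mp hdk with hdi | rfl
    · rw [ih hdi, contract_zero_right]
    · have hΘd : Θ.IsHomogeneous d := by simpa using hΘ
      exact contract_eq_zero_of_isHomogeneous_one hL
        (Nat.sub_self d ▸ isHomogeneous_contract hΘd hF)

end Degree

section DisjointVariables

variable {n : ℕ} {τ υ : Type*} {Θ P : MvPolynomial (Fin n) ℂ}

theorem contract_mem_range_rename {f : τ → Fin n} (hf : f.Injective) (Θ : MvPolynomial (Fin n) ℂ)
    (hP : P ∈ (rename (R := ℂ) f).range) : contract Θ P ∈ (rename (R := ℂ) f).range := by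
  induction Θ using MvPolynomial.induction_on generalizing P with
  | C a => rw [contract_C]; exact Subalgebra.smul_mem _ hP a
  | add Θ Ψ hΘ hΨ => rw [contract_add_left]; exact add_mem (hΘ hP) (hΨ hP)
  | mul_X Θ i hΘ => rw [contract_mul, contract_X]; exact hΘ (pderiv_mem_range_rename hf i hP)

theorem contract_rename_of_disjoint {f : τ → Fin n} {g : υ → Fin n}
    (hfg : Disjoint (Set.range f) (Set.range g)) (θ : MvPolynomial τ ℂ)
    (hP : P ∈ (rename (R := ℂ) g).range) : contract (rename f θ) P = constantCoeff θ • P := by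
  induction θ using MvPolynomial.induction_on with
  | C a => simp
  | add θ ψ hθ hψ => simp [hθ, hψ, add_smul]
  | mul_X θ i _ =>
    have hP' : pderiv (f i) P = 0 := pderiv_eq_zero_of_notMem_vars fun h =>
      Set.disjoint_left.mp hfg ⟨i, rfl⟩ (vars_subset_range_of_mem_range_rename hP h)
    simp [contract_mul, hP']

theorem contract_eq_zero_of_disjoint {f : τ → Fin n} {g : υ → Fin n}
    (hfg : Disjoint (Set.range f) (Set.range g)) (hΘ : Θ ∈ (rename (R := ℂ) f).range)
    (hΘ0 : constantCoeff Θ = 0) (hP : P ∈ (rename (R := ℂ) g).range) : contract Θ P = 0 := by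
  obtain ⟨θ, rfl⟩ := (AlgHom.mem_range _).mp hΘ
  rw [contract_rename_of_disjoint hfg θ hP, ← constantCoeff_rename f, hΘ0, zero_smul]

end DisjointVariables

section Pairing

open Nat

variable {n : ℕ} {τ : Type*} {G : MvPolynomial (Fin n) ℂ} {d : ℕ}

theorem prod_factorial_add_single (m : Fin n →₀ ℕ) (i : Fin n) :
    ∏ l, (((m + Finsupp.single i 1 : Fin n →₀ ℕ) l)! : ℂ) = (m i + 1) * ∏ l, ((m l)! : ℂ) := by
  rw [Fintype.prod_eq_mul_prod_compl i, Fintype.prod_eq_mul_prod_compl i (fun l => ((m l)! : ℂ))]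
  have hrest : ∀ l ∈ ({i}ᶜ : Finset (Fin n)),
      (((m + Finsupp.single i 1 : Fin n →₀ ℕ) l)! : ℂ) = (m l)! := fun l hl => by
      rw [Finsupp.add_apply, Finsupp.single_eq_of_ne (Finset.notMem_singleton.mp
        (Finset.mem_compl.mp hl)), add_zero]
  rw [Finset.prod_congr rfl hrest]
  simp [factorial_succ, mul_assoc]

theorem coeff_zero_contract_monomial (m : Fin n →₀ ℕ) (a : ℂ) (F : MvPolynomial (Fin n) ℂ) :
    coeff 0 (contract (monomial m a) F) = a * (∏ l, ((m l)! : ℂ)) * coeff m F := by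
  induction hk : m.degree generalizing m F with
  | zero =>
    obtain rfl := (Finsupp.degree_eq_zero_iff m).mp hk
    simp [← C_apply]
  | succ k ih =>
    obtain ⟨i, hi⟩ : ∃ i, m i ≠ 0 := by
      by_contra! h
      simp [show m = 0 from Finsupp.ext h] at hk
    obtain ⟨m, rfl⟩ : ∃ m', m = m' + Finsupp.single i 1 :=
      ⟨m - Finsupp.single i 1, (tsub_add_cancel_of_le (Finsupp.single_le_iff.mpr (by omega))).symm⟩
    have hdeg : m.degree = k := by simpa using hk
    rw [monomial_add_single, pow_one, contract_mul, contract_X, ih m _ hdeg, coeff_pderiv,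
      prod_factorial_add_single]
    ring

theorem exists_contract_eq_one {f : τ → Fin n} (hf : f.Injective) (hG : G.IsHomogeneous d)
    (hG0 : G ≠ 0) (hGf : G ∈ (rename (R := ℂ) f).range) :
    ∃ δ : MvPolynomial (Fin n) ℂ,
      δ.IsHomogeneous d ∧ δ ∈ (rename (R := ℂ) f).range ∧ contract δ G = 1 := by
  obtain ⟨m, hm⟩ := support_nonempty.mpr hG0
  set c : ℂ := (∏ l, ((m l)! : ℂ)) * coeff m G
  have hc : c ≠ 0 := mul_ne_zero
    (Finset.prod_ne_zero_iff.mpr fun l _ => by exact_mod_cast (m l).factorial_ne_zero)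
    (mem_support_iff.mp hm)
  have hδ : (monomial m c⁻¹).IsHomogeneous d :=
    isHomogeneous_monomial _ (hG.degree_eq_sum_deg_support hm).symm
  refine ⟨monomial m c⁻¹, hδ, ?_, ?_⟩
  · refine exists_rename_eq_of_vars_subset_range _ f hf ?_
    rw [vars_monomial (inv_ne_zero hc)]
    exact fun i hi => vars_subset_range_of_mem_range_rename hGf
      ((mem_vars_iff_mem_support i).mpr ⟨m, hm, hi⟩)
  · have h0 := isHomogeneous_contract hδ hG
    rw [Nat.sub_self] at h0
    rw [eq_C_of_isHomogeneous_zero h0, coeff_zero_contract_monomial, mul_assoc, inv_mul_cancel₀ hc,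
      C_1]

end Pairing

section Ideal

variable {n : ℕ} {Θ Δ G H : MvPolynomial (Fin n) ℂ} {d k : ℕ}

theorem apolarIdeal_inf_le_apolarIdeal_sub (G H : MvPolynomial (Fin n) ℂ) :
    apolarIdeal G ⊓ apolarIdeal H ≤ apolarIdeal (G - H) := fun Θ hΘ => by
  simp [mem_apolarIdeal.mp hΘ.1, mem_apolarIdeal.mp hΘ.2]

theorem apolarIdeal_sub_eq_inf_add_span
    (hconst : ∀ Θ, contract Θ G = contract Θ H → contract Θ G = C (coeff 0 (contract Θ G)))
    (hΔG : contract Δ G = 1) (hΔH : contract Δ H = 1) :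
    apolarIdeal (G - H) = apolarIdeal G ⊓ apolarIdeal H + Ideal.span {Δ} := by
  rw [Submodule.add_eq_sup]
  refine le_antisymm (fun Θ hΘ => ?_) (sup_le (apolarIdeal_inf_le_apolarIdeal_sub G H)
    ((Ideal.span_singleton_le_iff_mem _).mpr (by simp [hΔG, hΔH])))
  have hGH : contract Θ G = contract Θ H := sub_eq_zero.mp (by simpa using hΘ)
  set c := coeff 0 (contract Θ G)
  refine Submodule.mem_sup.mpr ⟨Θ - C c * Δ, ⟨?_, ?_⟩, C c * Δ,
    Ideal.mul_mem_left _ _ (Ideal.mem_span_singleton_self Δ), sub_add_cancel _ _⟩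
  · show contract _ G = 0
    rw [contract_sub_left, contract_mul, contract_C, hΔG, smul_eq_C_mul, mul_one]
    exact sub_eq_zero.mpr (hconst Θ hGH)
  · show contract _ H = 0
    rw [contract_sub_left, contract_mul, contract_C, hΔH, smul_eq_C_mul, mul_one, ← hGH]
    exact sub_eq_zero.mpr (hconst Θ hGH)

theorem mem_inf_of_mem_apolarIdeal_sub
    (hconst : ∀ Θ, contract Θ G = contract Θ H → contract Θ G = C (coeff 0 (contract Θ G)))
    (hG : G.IsHomogeneous d) (hH : H.IsHomogeneous d) (hΘ : Θ.IsHomogeneous k) (hkd : k ≠ d)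
    (hΘGH : Θ ∈ apolarIdeal (G - H)) : Θ ∈ apolarIdeal G ⊓ apolarIdeal H := by
  have hGH : contract Θ G = contract Θ H := sub_eq_zero.mp (by simpa using hΘGH)
  rcases hkd.lt_or_gt with hkd | hdk
  · have hG0 : contract Θ G = 0 := by
      rw [hconst Θ hGH, (isHomogeneous_contract hΘ hG).coeff_eq_zero (by simp; omega), C_0]
    exact ⟨hG0, mem_apolarIdeal.mpr (hGH ▸ hG0)⟩
  · exact ⟨contract_eq_zero_of_lt hΘ hG hdk, contract_eq_zero_of_lt hΘ hH hdk⟩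

end Ideal

theorem disjoint_range_castAdd_natAdd (i j : ℕ) :
    Disjoint (Set.range (Fin.castAdd j : Fin i → Fin (i + j))) (Set.range (Fin.natAdd i)) := by
  rw [Set.disjoint_left]
  rintro _ ⟨a, rfl⟩ ⟨b, hb⟩
  have := congrArg Fin.val hb
  simp at this
  omega

/-- Let `F = G - H` be a direct sum decomposition of degree `d`, with
`G` a nonzero degree-`d` form in the variables `x_1,…,x_i` (the first `i` variables) and
`H` a nonzero degree-`d` form in the variables `y_1,…,y_j` (the last `j` variables).
Then there are `δ₁` of degree `d` in the dual `α`-variables with `δ₁ ⌟ G = 1` and `δ₂`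
of degree `d` in the dual `β`-variables with `δ₂ ⌟ H = 1`, such that with `Δ = δ₁ + δ₂`
we have `F^⊥ = (G^⊥ ⊓ H^⊥) + ⟨Δ⟩`, and `(F^⊥)_k = (G^⊥ ⊓ H^⊥)_k` for all `k ≠ d`. -/
theorem apolar_ideal_of_direct_sum
    (i j d : ℕ) (hd : 1 ≤ d) (G H : MvPolynomial (Fin (i + j)) ℂ)
    (hGhom : G.IsHomogeneous d) (hHhom : H.IsHomogeneous d)
    (hG0 : G ≠ 0) (hH0 : H ≠ 0)
    (hGx : G ∈ (rename (Fin.castAdd j : Fin i → Fin (i + j))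
      (R := ℂ)).range)
    (hHy : H ∈ (rename (Fin.natAdd i : Fin j → Fin (i + j))
      (R := ℂ)).range) :
    ∃ δ₁ δ₂ : MvPolynomial (Fin (i + j)) ℂ,
      δ₁.IsHomogeneous d ∧ δ₂.IsHomogeneous d ∧
      δ₁ ∈ (rename (Fin.castAdd j : Fin i → Fin (i + j)) (R := ℂ)).range ∧
      δ₂ ∈ (rename (Fin.natAdd i : Fin j → Fin (i + j)) (R := ℂ)).range ∧
      contract δ₁ G = 1 ∧ contract δ₂ H = 1 ∧
      apolarIdeal (G - H) = apolarIdeal G ⊓ apolarIdeal H + Ideal.span {δ₁ + δ₂} ∧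
      (∀ k : ℕ, k ≠ d → ∀ Θ : MvPolynomial (Fin (i + j)) ℂ, Θ.IsHomogeneous k →
        (Θ ∈ apolarIdeal (G - H) ↔ Θ ∈ apolarIdeal G ⊓ apolarIdeal H)) := by
  have hdisj := disjoint_range_castAdd_natAdd i j
  obtain ⟨δ₁, hδ₁, hδ₁x, hδ₁G⟩ := exists_contract_eq_one (Fin.castAdd_injective i j) hGhom hG0 hGx
  obtain ⟨δ₂, hδ₂, hδ₂y, hδ₂H⟩ := exists_contract_eq_one (Fin.natAdd_injective _ _) hHhom hH0 hHy
  have hδ₁H : contract δ₁ H = 0 :=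
    contract_eq_zero_of_disjoint hdisj hδ₁x (hδ₁.coeff_eq_zero (by simp; omega)) hHy
  have hδ₂G : contract δ₂ G = 0 :=
    contract_eq_zero_of_disjoint hdisj.symm hδ₂y (hδ₂.coeff_eq_zero (by simp; omega)) hGx
  have hconst : ∀ Θ, contract Θ G = contract Θ H → contract Θ G = C (coeff 0 (contract Θ G)) :=
    fun Θ hGH => eq_C_of_mem_range_rename_of_disjoint hdisj
      (contract_mem_range_rename (Fin.castAdd_injective i j) Θ hGx)
      (hGH ▸ contract_mem_range_rename (Fin.natAdd_injective _ _) Θ hHy)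
  refine ⟨δ₁, δ₂, hδ₁, hδ₂, hδ₁x, hδ₂y, hδ₁G, hδ₂H,
    apolarIdeal_sub_eq_inf_add_span hconst (by simp [hδ₁G, hδ₂G]) (by simp [hδ₁H, hδ₂H]),
    fun k hk Θ hΘ => ⟨mem_inf_of_mem_apolarIdeal_sub hconst hGhom hHhom hΘ hk,
      fun h => apolarIdeal_inf_le_apolarIdeal_sub G H h⟩⟩
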